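/- Let f : ℤ → ℝ be nonnegative with bounded variation and let {p < r < q} be an essential peak for f with radius ω(r). Then r − ω(r) < p and q < r + ω(r). -/

import Mathlib

open Finset

noncomputable section

/-- Average of `f : ℤ → ℝ` over the integer interval `[x, y]`:
`A_{x,y} f = (1/(y-x+1)) ∑_{k=x}^{y} f(k)`. -/
def avg (f : ℤ → ℝ) (x y : ℤ) : ℝ :=
  (∑ k ∈ Finset.Icc x y, f k) / ((y - x + 1 : ℤ) : ℝ)

/-- The discrete centered Hardy–Littlewood maximal function
`Mf(n) = sup_{r ≥ 0} (1/(2r+1)) ∑_{k=-r}^{r} |f(n+k)|`. -/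
def dM (f : ℤ → ℝ) (n : ℤ) : ℝ :=
  ⨆ r : ℕ, avg (fun k => |f k|) (n - r) (n + r)

/-- The total variation `Var f = ∑_{k ∈ ℤ} |f(k+1) - f(k)|`. -/
def dVar (f : ℤ → ℝ) : ℝ := ∑' k : ℤ, |f (k + 1) - f k|

/-- `f` has bounded variation. -/
def BddVar (f : ℤ → ℝ) : Prop := Summable fun k : ℤ => |f (k + 1) - f k|

/-- A peak for `f`: integers `p < r < q` with `Mf(p) < Mf(r)` and `Mf(q) < Mf(r)`. -/
def IsPeak (f : ℤ → ℝ) (p r q : ℤ) : Prop :=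
  p < r ∧ r < q ∧ dM f p < dM f r ∧ dM f q < dM f r

/-- The variation of a peak `{p < r < q}`: `2·Mf(r) - Mf(p) - Mf(q)`. -/
def peakVar (f : ℤ → ℝ) (p r q : ℤ) : ℝ := 2 * dM f r - dM f p - dM f q

/-- An essential peak: `max_{p<k<q} f(k) ≤ Mf(r) - (1/4)·Var{p,r,q}`. -/
def IsEssentialPeak (f : ℤ → ℝ) (p r q : ℤ) : Prop :=
  IsPeak f p r q ∧
    ∀ k : ℤ, p < k → k < q → f k ≤ dM f r - (1 / 4) * peakVar f p r q

/-- `w` is the radius `ω(r)` of an (essential) peak with center `r`: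
the largest integer `w > 0` with `A_w f(r) = Mf(r)`. -/
def IsRadius (f : ℤ → ℝ) (r w : ℤ) : Prop :=
  0 < w ∧ avg f (r - w) (r + w) = dM f r ∧
    ∀ w' : ℤ, 0 < w' → avg f (r - w') (r + w') = dM f r → w' ≤ w

lemma tele (f : ℤ → ℝ) (a b : ℤ) (hab : a ≤ b) :
    |f b - f a| ≤ ∑ j ∈ Finset.Ico a b, |f (j+1) - f j| := by
  refine Int.le_induction (motive := fun b _ => |f b - f a| ≤ ∑ j ∈ Finset.Ico a b, |f (j+1) - f j|) ?_ ?_ b hab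
  · simp
  · intro b hb ih
    rw [show Ico a (b+1) = insert b (Ico a b) by ext k; simp; omega, Finset.sum_insert (by simp)]
    calc |f (b+1) - f a| ≤ |f (b+1) - f b| + |f b - f a| := by
          have h := abs_add_le (f (b+1) - f b) (f b - f a)
          have : f (b+1) - f b + (f b - f a) = f (b+1) - f a := by ring
          rwa [this] at h
      _ ≤ _ := by linarith

lemma f_le_bound (f : ℤ → ℝ) (hbv : BddVar f) (k : ℤ) : f k ≤ f 0 + dVar f := by
  have hs : ∀ a b : ℤ, a ≤ b → ∑ j ∈ Finset.Ico a b, |f (j+1) - f j| ≤ dVar f := by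
    intro a b _
    exact Summable.sum_le_tsum _ (fun j _ => abs_nonneg _) hbv
  rcases le_or_gt 0 k with h | h
  · have := tele f 0 k h
    have h2 := hs 0 k h
    have := abs_sub_abs_le_abs_sub (f k) (f 0)
    have h3 : f k - f 0 ≤ |f k - f 0| := le_abs_self _
    linarith
  · have := tele f k 0 h.le
    have h2 := hs k 0 h.le
    rw [abs_sub_comm] at this
    have h3 : f k - f 0 ≤ |f k - f 0| := le_abs_self _
    linarith

lemma avg_le_bound (f : ℤ → ℝ) (hf : ∀ n, 0 ≤ f n) (hbv : BddVar f) {x y : ℤ} (hxy : x ≤ y) :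
    avg (fun k => |f k|) x y ≤ f 0 + dVar f := by
  have hC : ∀ k ∈ Finset.Icc x y, |f k| ≤ f 0 + dVar f := by
    intro k _
    rw [abs_of_nonneg (hf k)]; exact f_le_bound f hbv k
  have hsum := Finset.sum_le_card_nsmul _ _ _ hC
  rw [nsmul_eq_mul] at hsum
  have hcard : ((Finset.Icc x y).card : ℝ) = ((y - x + 1 : ℤ) : ℝ) := by
    rw [Int.card_Icc]
    have h1 : ((y + 1 - x).toNat : ℤ) = y + 1 - x := Int.toNat_of_nonneg (by omega)
    have h2 := congrArg (Int.cast : ℤ → ℝ) h1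
    push_cast at h2 ⊢
    linarith
  rw [avg, div_le_iff₀ (by exact_mod_cast (by omega : (0:ℤ) < y - x + 1))]
  calc ∑ k ∈ Finset.Icc x y, |f k| ≤ ((Finset.Icc x y).card : ℝ) * (f 0 + dVar f) := hsum
    _ = (f 0 + dVar f) * ((y - x + 1 : ℤ) : ℝ) := by rw [hcard]; ring

lemma avg_le_dM (f : ℤ → ℝ) (hf : ∀ n, 0 ≤ f n) (hbv : BddVar f) (n : ℤ) (s : ℕ) :
    avg (fun k => |f k|) (n - s) (n + s) ≤ dM f n := by
  apply le_ciSup (f := fun r : ℕ => avg (fun k => |f k|) (n - r) (n + r))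
  · refine ⟨f 0 + dVar f, ?_⟩
    rintro _ ⟨r, rfl⟩
    exact avg_le_bound f hf hbv (by omega)

lemma avg_abs (f : ℤ → ℝ) (hf : ∀ n, 0 ≤ f n) (x y : ℤ) :
    avg (fun k => |f k|) x y = avg f x y := by
  unfold avg
  congr 1
  exact Finset.sum_congr rfl fun k _ => abs_of_nonneg (hf k)

/-- sum over a centered interval is at most length times dM -/
lemma sum_centered_le (f : ℤ → ℝ) (hf : ∀ n, 0 ≤ f n) (hbv : BddVar f) (n : ℤ) {s : ℤ} (hs : 0 ≤ s) :
    ∑ k ∈ Finset.Icc (n - s) (n + s), f k ≤ (2 * (s : ℝ) + 1) * dM f n := by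
  have h := avg_le_dM f hf hbv n s.toNat
  rw [Int.toNat_of_nonneg hs, avg_abs f hf] at h
  rw [avg] at h
  have hd : ((n + s - (n - s) + 1 : ℤ) : ℝ) = 2 * (s : ℝ) + 1 := by push_cast; ring
  rw [hd, div_le_iff₀ (by positivity)] at h
  linarith

lemma pt_le_dM (f : ℤ → ℝ) (hf : ∀ n, 0 ≤ f n) (hbv : BddVar f) (n : ℤ) : f n ≤ dM f n := by
  have h := sum_centered_le f hf hbv n (le_refl 0)
  simpa using h

lemma split_sum (g : ℤ → ℝ) {x c y : ℤ} (h1 : x ≤ c) (h2 : c ≤ y + 1) :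
    ∑ k ∈ Icc x y, g k = (∑ k ∈ Icc x (c-1), g k) + ∑ k ∈ Icc c y, g k := by
  have he : Icc x y = Icc x (c-1) ∪ Icc c y := by ext k; simp; omega
  rw [he, Finset.sum_union]
  rw [Finset.disjoint_left]; intro a ha hb; simp at ha hb; omega

lemma sum_le_of_le (g : ℤ → ℝ) {x y : ℤ} (hxy : x ≤ y + 1) (B : ℝ)
    (hB : ∀ k, x ≤ k → k ≤ y → g k ≤ B) :
    ∑ k ∈ Icc x y, g k ≤ ((y : ℝ) - x + 1) * B := by
  have hsum := Finset.sum_le_card_nsmul (Finset.Icc x y) g B (fun k hk => by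
    simp at hk; exact hB k hk.1 hk.2)
  rw [nsmul_eq_mul] at hsum
  have hcard : ((Finset.Icc x y).card : ℝ) = ((y : ℝ) - x + 1) := by
    rw [Int.card_Icc]
    have : ((y + 1 - x).toNat : ℤ) = y + 1 - x := Int.toNat_of_nonneg (by omega)
    have := congrArg (Int.cast : ℤ → ℝ) this
    push_cast at this ⊢
    linarith
  rw [hcard] at hsum; exact hsum


/-- for a nonnegative `f` of bounded variation and an essential peak
`{p < r < q}` with radius `ω(r)`, one has `r - ω(r) < p` and `q < r + ω(r)`. -/
theorem stmt2 (f : ℤ → ℝ) (hf : ∀ n, 0 ≤ f n) (hbv : BddVar f)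
    (p r q ω : ℤ) (hpk : IsEssentialPeak f p r q) (hrad : IsRadius f r ω) :
    r - ω < p ∧ q < r + ω := by
  obtain ⟨⟨hpr, hrq, hMp, hMq⟩, hess⟩ := hpk
  obtain ⟨hω, havg, -⟩ := hrad
  set M := dM f r with hM
  set Mp := dM f p with hMp'
  set Mq := dM f q with hMq'
  have hV : 0 < peakVar f p r q := by unfold peakVar; rw [← hM, ← hMp', ← hMq']; linarith
  set V := peakVar f p r q with hV'
  set Bp : ℝ := max Mp (M - 1/4 * V) with hBp'
  set Bq : ℝ := max Mq (M - 1/4 * V) with hBq'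
  have hBp : ∀ k : ℤ, p ≤ k → k < q → f k ≤ Bp := by
    intro k h1 h2
    rcases eq_or_lt_of_le h1 with rfl | h
    · exact le_trans (pt_le_dM f hf hbv _) (le_max_left _ _)
    · exact le_trans (hess k h h2) (le_max_right _ _)
  have hBq : ∀ k : ℤ, p < k → k ≤ q → f k ≤ Bq := by
    intro k h1 h2
    rcases eq_or_lt_of_le h2 with rfl | h
    · exact le_trans (pt_le_dM f hf hbv _) (le_max_left _ _)
    · exact le_trans (hess k h1 h) (le_max_right _ _)
  have hBpM : Bp < M := max_lt hMp (by linarith)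
  have hBqM : Bq < M := max_lt hMq (by linarith)
  have hω1 : (1 : ℝ) ≤ (ω : ℝ) := by exact_mod_cast hω
  have htot : ∑ k ∈ Icc (r-ω) (r+ω), f k = (2*(ω:ℝ)+1) * M := by
    rw [avg] at havg
    have hd : ((r + ω - (r - ω) + 1 : ℤ) : ℝ) = 2*(ω:ℝ)+1 := by push_cast; ring
    rw [hd, div_eq_iff (by linarith)] at havg
    rw [havg]; ring
  constructor
  · -- r - ω < p
    by_contra hA
    push_neg at hA  -- p ≤ r - ω
    rcases le_or_gt q (r+ω) with hq | hq
    · have hsplit := split_sum f (x := r-ω) (c := 2*q - r - ω) (y := r+ω) (by omega) (by omega)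
      have hL := sum_le_of_le f (x := r-ω) (y := 2*q - r - ω - 1) (by omega) Bp
        (fun k h1 h2 => hBp k (by omega) (by omega))
      have hR := sum_centered_le f hf hbv q (s := r + ω - q) (by omega)
      rw [show q - (r + ω - q) = 2*q - r - ω from by ring,
          show q + (r + ω - q) = r + ω from by ring] at hR
      rw [htot] at hsplit
      have ha : (1:ℝ) ≤ (q:ℝ) - r := by
        have h : (1:ℤ) ≤ q - r := by omega
        exact_mod_cast h
      have hb : (0:ℝ) ≤ (r:ℝ) + ω - q := by
        have : (q:ℝ) ≤ (r:ℝ) + ω := by exact_mod_cast hq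
        linarith
      have e1 : ((2*q - r - ω - 1 : ℤ) : ℝ) - ((r - ω : ℤ):ℝ) + 1 = 2*((q:ℝ) - r) := by
        push_cast; ring
      have e2 : ((r + ω - q : ℤ) : ℝ) = (r:ℝ) + ω - q := by push_cast; ring
      rw [e1] at hL
      rw [e2] at hR
      have k1 : 2*((q:ℝ) - r) * Bp < 2*((q:ℝ) - r) * M :=
        mul_lt_mul_of_pos_left hBpM (by linarith)
      have k2 : (2*((r:ℝ) + ω - q)+1) * Mq < (2*((r:ℝ) + ω - q)+1) * M :=
        mul_lt_mul_of_pos_left hMq (by linarith)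
      nlinarith [hL, hR, hsplit, k1, k2]
    · have hL := sum_le_of_le f (x := r-ω) (y := r+ω) (by omega) Bp
        (fun k h1 h2 => hBp k (by omega) (by omega))
      have e1 : ((r + ω : ℤ):ℝ) - ((r - ω : ℤ):ℝ) + 1 = 2*(ω:ℝ)+1 := by push_cast; ring
      rw [e1] at hL
      rw [htot] at hL
      nlinarith [hL, mul_lt_mul_of_pos_left hBpM (show (0:ℝ) < 2*(ω:ℝ)+1 by linarith)]
  · -- q < r + ω
    by_contra hB2
    push_neg at hB2  -- r + ω ≤ q
    rcases le_or_gt (r-ω) p with hp | hp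
    · have hsplit := split_sum f (x := r-ω) (c := 2*p - r + ω + 1) (y := r+ω) (by omega) (by omega)
      have hLc := sum_centered_le f hf hbv p (s := p - r + ω) (by omega)
      rw [show p - (p - r + ω) = r - ω from by ring,
          show p + (p - r + ω) = 2*p - r + ω from by ring] at hLc
      rw [show 2*p - r + ω + 1 - 1 = 2*p - r + ω from by ring] at hsplit
      have hR := sum_le_of_le f (x := 2*p - r + ω + 1) (y := r+ω) (by omega) Bq
        (fun k h1 h2 => hBq k (by omega) (by omega))
      rw [htot] at hsplit
      have ht : (0:ℝ) ≤ (p:ℝ) - r + ω := by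
        have : ((r - ω : ℤ):ℝ) ≤ (p:ℝ) := by exact_mod_cast hp
        push_cast at this; linarith
      have hc2 : (1:ℝ) ≤ (r:ℝ) - p := by
        have h : (1:ℤ) ≤ r - p := by omega
        exact_mod_cast h
      have e1 : ((p - r + ω : ℤ) : ℝ) = (p:ℝ) - r + ω := by push_cast; ring
      have e2 : ((r + ω : ℤ):ℝ) - ((2*p - r + ω + 1 : ℤ):ℝ) + 1 = 2*((r:ℝ) - p) := by
        push_cast; ring
      rw [e1] at hLc
      rw [e2] at hR
      have k1 : (2*((p:ℝ) - r + ω)+1) * Mp < (2*((p:ℝ) - r + ω)+1) * M :=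
        mul_lt_mul_of_pos_left hMp (by linarith)
      have k2 : 2*((r:ℝ) - p) * Bq < 2*((r:ℝ) - p) * M :=
        mul_lt_mul_of_pos_left hBqM (by linarith)
      nlinarith [hLc, hR, hsplit, k1, k2]
    · have hL := sum_le_of_le f (x := r-ω) (y := r+ω) (by omega) Bq
        (fun k h1 h2 => hBq k (by omega) (by omega))
      have e1 : ((r + ω : ℤ):ℝ) - ((r - ω : ℤ):ℝ) + 1 = 2*(ω:ℝ)+1 := by push_cast; ring
      rw [e1] at hL
      rw [htot] at hL
      nlinarith [hL, mul_lt_mul_of_pos_left hBqM (show (0:ℝ) < 2*(ω:ℝ)+1 by linarith)]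

end
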